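/- arXiv:2302.05552 — 3 statements merged into one kernel-verified Lean document; each statement's English description precedes it below -/
import Mathlib

section
/- For vectors a, b in Z_+^2, define flux(a,b) = 0 if a and b are comparable in the product order (a ≤ b coordinatewise or b ≤ a coordinatewise), and flux(a,b) = min(|a_1 - b_1|, |a_2 - b_2|) otherwise. Then flux(a,b) equals the ℓ∞-distance from a to the set of points in Z_+^2 that are comparable to b. -/
/-- The flux of two vectors in `ℕ × ℕ`: zero if they are comparable in the
product (coordinatewise) order, and otherwise the minimum of the coordinatewise
distances. -/
def flux (a b : ℕ × ℕ) : ℕ :=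
  if a ≤ b ∨ b ≤ a then 0 else min (Nat.dist a.1 b.1) (Nat.dist a.2 b.2)

/-- `flux a b` equals the ℓ∞-distance from `a` to the set of points of `ℕ × ℕ`
comparable to `b` in the product order. -/
theorem flux_eq_linf_dist_to_comparable (a b : ℕ × ℕ) :
    flux a b = sInf {n : ℕ | ∃ s : ℕ × ℕ, (s ≤ b ∨ b ≤ s) ∧
      n = max (Nat.dist a.1 s.1) (Nat.dist a.2 s.2)} := by
  obtain ⟨a1, a2⟩ := a
  obtain ⟨b1, b2⟩ := b
  set S := {n : ℕ | ∃ s : ℕ × ℕ, (s ≤ (b1, b2) ∨ (b1, b2) ≤ s) ∧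
      n = max (Nat.dist a1 s.1) (Nat.dist a2 s.2)} with hS
  have hne : S.Nonempty := ⟨max (Nat.dist a1 b1) (Nat.dist a2 b2),
    ⟨(b1, b2), Or.inl le_rfl, rfl⟩⟩
  apply le_antisymm
  · apply le_csInf hne
    rintro n ⟨⟨s1, s2⟩, hs, rfl⟩
    by_cases h : (a1, a2) ≤ (b1, b2) ∨ (b1, b2) ≤ (a1, a2)
    · simp only [flux, if_pos h]; exact Nat.zero_le _
    · simp only [flux, if_neg h]
      simp only [Prod.mk_le_mk, not_or, not_and_or, not_le] at h
      rcases hs with hs | hs <;> rw [Prod.mk_le_mk] at hs <;>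
        simp only [Nat.dist] at * <;> omega
  · have h1 : max (Nat.dist a1 b1) (Nat.dist a2 a2) ∈ {n : ℕ | ∃ s : ℕ × ℕ,
        (s ≤ (b1, b2) ∨ (b1, b2) ≤ s) ∧ n = max (Nat.dist a1 s.1) (Nat.dist a2 s.2)} := by
      refine ⟨(b1, a2), ?_, rfl⟩
      rcases le_total a2 b2 with h | h
      · exact Or.inl (Prod.mk_le_mk.2 ⟨le_rfl, h⟩)
      · exact Or.inr (Prod.mk_le_mk.2 ⟨le_rfl, h⟩)
    have h2 : max (Nat.dist a1 a1) (Nat.dist a2 b2) ∈ {n : ℕ | ∃ s : ℕ × ℕ,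
        (s ≤ (b1, b2) ∨ (b1, b2) ≤ s) ∧ n = max (Nat.dist a1 s.1) (Nat.dist a2 s.2)} := by
      refine ⟨(a1, b2), ?_, rfl⟩
      rcases le_total a1 b1 with h | h
      · exact Or.inl (Prod.mk_le_mk.2 ⟨h, le_rfl⟩)
      · exact Or.inr (Prod.mk_le_mk.2 ⟨h, le_rfl⟩)
    have i1 := Nat.sInf_le h1
    have i2 := Nat.sInf_le h2
    rw [Nat.dist_self, Nat.max_eq_left (Nat.zero_le _)] at i1
    rw [Nat.dist_self, Nat.max_eq_right (Nat.zero_le _)] at i2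
    by_cases h : (a1, a2) ≤ (b1, b2) ∨ (b1, b2) ≤ (a1, a2)
    · have h0 : (0 : ℕ) ∈ S := ⟨(a1, a2), h, by simp⟩
      have i0 := Nat.sInf_le h0
      simp only [flux, if_pos h]
      simpa using i0
    · simp only [flux, if_neg h]
      exact le_min i1 i2
end

section
/- Suppose two bins contain a_1 and a_2 balls respectively (a_1, a_2 ∈ Z_+). One can achieve b_1 and b_2 balls (b_1, b_2 ∈ Z_+) by: (a) first adding a total of (b_1+b_2)-(a_1+a_2) balls to the two bins (or removing if negative), and (b) then transferring exactly flux((a_1,a_2),(b_1,b_2)) balls from one bin to the other, keeping all counts nonnegative throughout. -/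
/-- Starting from bins with `a₁`, `a₂` balls, one can reach `b₁`, `b₂` balls by
first adding a total of `(b₁+b₂)-(a₁+a₂)` balls (or removing, if negative),
reaching an intermediate nonnegative state `(c₁, c₂)`, and then transferring
exactly `flux (a₁,a₂) (b₁,b₂)` balls from one bin to the other. -/
theorem flux_transfer (a₁ a₂ b₁ b₂ : ℕ) :
    ∃ (c₁ c₂ : ℕ) (t : ℤ),
      c₁ + c₂ = b₁ + b₂ ∧
      |(c₁ : ℤ) - (a₁ : ℤ)| + |(c₂ : ℤ) - (a₂ : ℤ)| =
        |((b₁ : ℤ) + (b₂ : ℤ)) - ((a₁ : ℤ) + (a₂ : ℤ))| ∧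
      t.natAbs = flux (a₁, a₂) (b₁, b₂) ∧
      (c₁ : ℤ) + t = (b₁ : ℤ) ∧ (c₂ : ℤ) - t = (b₂ : ℤ) := by
  by_cases h : (a₁, a₂) ≤ (b₁, b₂) ∨ (b₁, b₂) ≤ (a₁, a₂)
  · refine ⟨b₁, b₂, 0, by omega, ?_, ?_, by push_cast; ring, by push_cast; ring⟩
    · simp only [Prod.mk_le_mk] at h
      simp only [Int.abs_eq_natAbs]
      omega
    · rw [flux, if_pos h]; rfl
  · simp only [Prod.mk_le_mk, not_or, not_and_or, not_le] at h
    have hcase : (a₁ < b₁ ∧ b₂ < a₂) ∨ (b₁ < a₁ ∧ a₂ < b₂) := by omega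
    have hflux : flux (a₁, a₂) (b₁, b₂) = min (Nat.dist a₁ b₁) (Nat.dist a₂ b₂) := by
      rw [flux, if_neg]
      simp only [Prod.mk_le_mk, not_or, not_and_or, not_le]
      omega
    simp only [Nat.dist] at hflux
    rcases hcase with ⟨h1, h2⟩ | ⟨h1, h2⟩
    · set m := min (b₁ - a₁) (a₂ - b₂) with hm
      refine ⟨b₁ - m, b₂ + m, (m : ℤ), by omega, ?_, by simp; omega, ?_, ?_⟩
      · simp only [Int.abs_eq_natAbs]; omega
      · push_cast; omega
      · push_cast; omega
    · set m := min (a₁ - b₁) (b₂ - a₂) with hm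
      refine ⟨b₁ + m, b₂ - m, -(m : ℤ), by omega, ?_, by simp; omega, ?_, ?_⟩
      · simp only [Int.abs_eq_natAbs]; omega
      · push_cast; omega
      · push_cast; omega
end

section
/- In the consistency-enforced counts of the Private Measure Mechanism: let n_θ be true counts, n'_θ = (n_θ + λ_θ)_+ noisy counts, and suppose (m_{θ0}, m_{θ1}) ∈ Z_+^2 is comparable (in the product order) to (n'_{θ0}, n'_{θ1}) with m_{θ0}+m_{θ1} = m_θ. Then flux((n_{θ0}, n_{θ1}), (m_{θ0}, m_{θ1})) ≤ max(|λ_{θ0}|, |λ_{θ1}|). -/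
/-- In the consistency step of the Private Measure Mechanism: if the consistent
counts `(m₀, m₁)` sum to `mθ` and are comparable (in the product order) to the
noisy counts `((n₀ + λ₀)₊, (n₁ + λ₁)₊)`, then the flux between the true counts
`(n₀, n₁)` and `(m₀, m₁)` is at most `max |λ₀| |λ₁|`. -/
theorem flux_le_max_noise (n₀ n₁ m₀ m₁ mθ : ℕ) (lam₀ lam₁ : ℤ)
    (hsum : m₀ + m₁ = mθ)
    (hcomp : ((m₀, m₁) : ℕ × ℕ) ≤ (((n₀ : ℤ) + lam₀).toNat, ((n₁ : ℤ) + lam₁).toNat) ∨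
      ((((n₀ : ℤ) + lam₀).toNat, ((n₁ : ℤ) + lam₁).toNat) : ℕ × ℕ) ≤ (m₀, m₁)) :
    (flux (n₀, n₁) (m₀, m₁) : ℤ) ≤ max |lam₀| |lam₁| := by
  unfold flux
  split
  · simp only [Nat.cast_zero]
    exact le_max_of_le_left (abs_nonneg _)
  · rename_i h
    simp only [Prod.mk_le_mk, not_or] at h hcomp
    rcases abs_cases lam₀ with ⟨h0, _⟩ | ⟨h0, _⟩ <;>
      rcases abs_cases lam₁ with ⟨h1, _⟩ | ⟨h1, _⟩ <;>
      rw [h0, h1] <;>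
      simp only [Nat.dist] <;>
      push_cast <;>
      omega
end
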